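/- Let h:𝕏_T→ℝ be measurable with ∫_{𝕏_T}|h(s,x)|² ν_T(ds,dx)<∞, and suppose that for every δ>0 and every measurable E⊆𝕏_T with ν_T(E)<∞ one has ∫_E exp(δ|h(s,x)|) ν_T(ds,dx)<∞. Fix N∈ℕ. Then for every η>0 there exists δ>0 such that for every Borel set A⊆[0,T] with Lebesgue measure λ_T(A)<δ one has sup_{g∈S^N} ∫_A ∫_𝕏 |h(s,x)|·|g(s,x)−1| ν(dx) ds ≤ η. -/

import Mathlib

open MeasureTheory Real Filter
open scoped ENNReal

/- With `l(b) = b log b - b + 1` and `ψ(x) = eˣ - x - 1`, the pointwise Young inequality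
`σ a |b - 1| ≤ l(b) + ψ(σ a)` splits `∫_A |h| |g - 1|` into `σ⁻¹ L_T(g) ≤ σ⁻¹ N` plus
`σ⁻¹ ∫_{A × 𝕏} ψ(σ |h|)`. Taking `σ = (N + 1) / η`, it remains to make the second integral
small: `ψ(σ |h|)` is `νT`-integrable, since it is at most `σ² |h|²` where `σ |h| ≤ 1` and at most
`exp (σ |h|)` on the complement, which has finite measure by Chebyshev. Its marginal in time is
then Lebesgue integrable on `[0, T]`, and absolute continuity of the integral gives `δ`. -/

namespace Real

/-- Young-type inequality: for the pairing `x |b - 1|`, `eˣ - x - 1` dominates the convex conjugate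
of `b log b - b + 1`. -/
theorem mul_abs_sub_one_le {x b : ℝ} (hx : 0 ≤ x) (hb : 0 ≤ b) :
    x * |b - 1| ≤ (b * log b - b + 1) + (exp x - x - 1) := by
  have young (u : ℝ) : u * b ≤ exp u + b * log b - b := by
    rcases hb.eq_or_lt with rfl | hb'
    · simpa using (exp_pos u).le
    · have h1 := add_one_le_exp (u - log b)
      rw [exp_sub, exp_log hb', le_div_iff₀ hb'] at h1
      nlinarith
  rcases le_or_gt 1 b with hb1 | hb1
  · rw [abs_of_nonneg (by linarith)]
    linarith [young x]
  · rw [abs_of_neg (by linarith)]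
    -- `e⁻ˣ + x ≤ eˣ - x` for `x ≥ 0`, i.e. `x ≤ sinh x`
    have hsinh : x ≤ sinh x := by
      rcases hx.eq_or_lt with rfl | hx'
      · simp
      · exact (self_lt_sinh_iff.mpr hx').le
    rw [sinh_eq] at hsinh
    linarith [young (-x)]

theorem exp_sub_sub_one_le_sq {x : ℝ} (hx : |x| ≤ 1) : exp x - x - 1 ≤ x ^ 2 := by
  have := abs_exp_sub_one_sub_id_le hx
  linarith [le_abs_self (exp x - 1 - x)]

theorem ofReal_mul_abs_sub_one_le {σ a b : ℝ} (hσ : 0 < σ) (ha : 0 ≤ a) (hb : 0 ≤ b) :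
    ENNReal.ofReal (a * |b - 1|) ≤ ENNReal.ofReal σ⁻¹
      * (ENNReal.ofReal (b * log b - b + 1) + ENNReal.ofReal (exp (σ * a) - σ * a - 1)) := by
  have hyoung := mul_abs_sub_one_le (mul_nonneg hσ.le ha) hb
  rw [mul_assoc, ← le_inv_mul_iff₀ hσ] at hyoung
  calc _ ≤ _ := ENNReal.ofReal_le_ofReal hyoung
    _ = _ := ENNReal.ofReal_mul (inv_nonneg.mpr hσ.le)
    _ ≤ _ := by gcongr; exact ENNReal.ofReal_add_le

end Real

section Integrability

variable {α : Type*} [MeasurableSpace α] {μ : Measure α}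

theorem measure_lt_abs_lt_top_of_lintegral_sq_lt_top {h : α → ℝ} (hm : Measurable h)
    (hL2 : ∫⁻ q, ENNReal.ofReal (|h q| ^ 2) ∂μ < ⊤) {c : ℝ} (hc : 0 < c) :
    μ {q | c < |h q|} < ⊤ := by
  have hc2 : ENNReal.ofReal (c ^ 2) ≠ 0 := by simpa using hc.ne'
  calc μ {q | c < |h q|} ≤ μ {q | ENNReal.ofReal (c ^ 2) ≤ ENNReal.ofReal (|h q| ^ 2)} :=
        measure_mono fun q hq => ENNReal.ofReal_le_ofReal (by
          have : c < |h q| := hq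
          nlinarith)
    _ ≤ (∫⁻ q, ENNReal.ofReal (|h q| ^ 2) ∂μ) / ENNReal.ofReal (c ^ 2) :=
        meas_ge_le_lintegral_div (by fun_prop) hc2 ENNReal.ofReal_ne_top
    _ < ⊤ := ENNReal.div_lt_top hL2.ne hc2

theorem lintegral_exp_mul_abs_sub_sub_one_lt_top {h : α → ℝ} (hm : Measurable h)
    (hL2 : ∫⁻ q, ENNReal.ofReal (|h q| ^ 2) ∂μ < ⊤) {σ : ℝ} (hσ : 0 < σ)
    (hexp : ∀ E : Set α, MeasurableSet E → μ E < ⊤ →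
      ∫⁻ q in E, ENNReal.ofReal (exp (σ * |h q|)) ∂μ < ⊤) :
    ∫⁻ q, ENNReal.ofReal (exp (σ * |h q|) - σ * |h q| - 1) ∂μ < ⊤ := by
  set F := {q | σ⁻¹ < |h q|}
  have hF : MeasurableSet F := measurableSet_lt measurable_const hm.abs
  have hbound (q : α) : ENNReal.ofReal (exp (σ * |h q|) - σ * |h q| - 1)
      ≤ ENNReal.ofReal (σ ^ 2) * ENNReal.ofReal (|h q| ^ 2)
        + F.indicator (fun q => ENNReal.ofReal (exp (σ * |h q|))) q := by
    have hσh : 0 ≤ σ * |h q| := by positivity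
    by_cases hq : q ∈ F
    · rw [Set.indicator_of_mem hq]
      exact le_add_left (ENNReal.ofReal_le_ofReal (by linarith))
    · have hsmall : σ * |h q| ≤ 1 :=
        calc σ * |h q| ≤ σ * σ⁻¹ := by gcongr; exact not_lt.mp hq
          _ = 1 := mul_inv_cancel₀ hσ.ne'
      rw [← ENNReal.ofReal_mul (by positivity)]
      refine le_add_right (ENNReal.ofReal_le_ofReal ?_)
      calc exp (σ * |h q|) - σ * |h q| - 1 ≤ (σ * |h q|) ^ 2 :=
            exp_sub_sub_one_le_sq (by rwa [abs_of_nonneg hσh])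
        _ = σ ^ 2 * |h q| ^ 2 := by ring
  calc _ ≤ _ := lintegral_mono hbound
    _ = ENNReal.ofReal (σ ^ 2) * ∫⁻ q, ENNReal.ofReal (|h q| ^ 2) ∂μ
        + ∫⁻ q in F, ENNReal.ofReal (exp (σ * |h q|)) ∂μ := by
      rw [lintegral_add_left (by fun_prop), lintegral_const_mul _ (by fun_prop),
        lintegral_indicator hF]
    _ < ⊤ := ENNReal.add_lt_top.mpr ⟨ENNReal.mul_lt_top ENNReal.ofReal_lt_top hL2,
        hexp F hF (measure_lt_abs_lt_top_of_lintegral_sq_lt_top hm hL2 (inv_pos.mpr hσ))⟩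

end Integrability

theorem exists_pos_setLIntegral_prod_univ_lt_of_measure_lt {α β : Type*} [MeasurableSpace α]
    [MeasurableSpace β] {μ : Measure α} {ν : Measure β} [SFinite μ] [SFinite ν]
    {ρ : α × β → ℝ≥0∞} (hρ : Measurable ρ) (hint : ∫⁻ q, ρ q ∂μ.prod ν ≠ ⊤) {ε : ℝ≥0∞}
    (hε : ε ≠ 0) :
    ∃ δ > 0, ∀ A : Set α, μ A < δ → ∫⁻ q in A ×ˢ Set.univ, ρ q ∂μ.prod ν < ε := by
  rw [lintegral_prod ρ hρ.aemeasurable] at hint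
  obtain ⟨δ, hδ, hsmall⟩ := exists_pos_setLIntegral_lt_of_measure_lt hint hε
  refine ⟨δ, hδ, fun A hA => ?_⟩
  rw [← Measure.restrict_prod_eq_prod_univ, lintegral_prod ρ hρ.aemeasurable]
  exact hsmall A hA

theorem stmt_4_general
    {𝕏 : Type*}
    [MeasurableSpace 𝕏]
    (T : ℝ)
    (ν : Measure 𝕏) [SigmaFinite ν]
    (νT : Measure (ℝ × 𝕏)) (hνT : νT = (volume.restrict (Set.Icc 0 T)).prod ν)
    (h : ℝ × 𝕏 → ℝ) (hm : Measurable h)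
    (hL2 : ∫⁻ q, ENNReal.ofReal (|h q| ^ 2) ∂νT < ⊤)
    (hexp : ∀ δ : ℝ, 0 < δ → ∀ E : Set (ℝ × 𝕏), MeasurableSet E → νT E < ⊤ →
        ∫⁻ q in E, ENNReal.ofReal (Real.exp (δ * |h q|)) ∂νT < ⊤)
    (N : ℕ) :
    ∀ η : ℝ, 0 < η → ∃ δ : ℝ, 0 < δ ∧
      ∀ A : Set ℝ, MeasurableSet A → A ⊆ Set.Icc 0 T → volume A < ENNReal.ofReal δ →
        ∀ g ∈ {g : ℝ × 𝕏 → ℝ | Measurable g ∧ (∀ q, 0 ≤ g q) ∧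
            ∫⁻ q, ENNReal.ofReal (g q * Real.log (g q) - g q + 1) ∂νT ≤ (N : ℝ≥0∞)},
          ∫⁻ q in A ×ˢ (Set.univ : Set 𝕏), ENNReal.ofReal (|h q| * |g q - 1|) ∂νT
            ≤ ENNReal.ofReal η := by
  intro η hη
  set σ : ℝ := (N + 1) / η
  have hσ : 0 < σ := by positivity
  set ρ : ℝ × 𝕏 → ℝ≥0∞ := fun q => ENNReal.ofReal (exp (σ * |h q|) - σ * |h q| - 1)
  have hρ : ∫⁻ q, ρ q ∂νT ≠ ⊤ :=
    (lintegral_exp_mul_abs_sub_sub_one_lt_top hm hL2 hσ (hexp σ hσ)).ne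
  subst hνT
  obtain ⟨δ, hδ, hsmall⟩ :=
    exists_pos_setLIntegral_prod_univ_lt_of_measure_lt (by fun_prop) hρ one_ne_zero
  obtain ⟨δ', -, hδ'0, hδ'⟩ := ENNReal.lt_iff_exists_real_btwn.mp hδ
  refine ⟨δ', ENNReal.ofReal_pos.mp hδ'0, fun A _ _ hAvol g ⟨hgm, hg0, hgN⟩ => ?_⟩
  have hA : volume.restrict (Set.Icc 0 T) A < δ :=
    (Measure.restrict_apply_le _ _).trans_lt (hAvol.trans hδ')
  calc ∫⁻ q in A ×ˢ Set.univ, ENNReal.ofReal (|h q| * |g q - 1|) ∂_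
      ≤ ∫⁻ q in A ×ˢ Set.univ, ENNReal.ofReal σ⁻¹
          * (ENNReal.ofReal (g q * log (g q) - g q + 1) + ρ q) ∂_ :=
        lintegral_mono fun q => ofReal_mul_abs_sub_one_le hσ (abs_nonneg (h q)) (hg0 q)
    _ = ENNReal.ofReal σ⁻¹
          * (∫⁻ q in A ×ˢ Set.univ, ENNReal.ofReal (g q * log (g q) - g q + 1) ∂_
            + ∫⁻ q in A ×ˢ Set.univ, ρ q ∂_) := by
      rw [lintegral_const_mul' _ _ ENNReal.ofReal_ne_top, lintegral_add_left (by fun_prop)]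
    _ ≤ ENNReal.ofReal σ⁻¹ * (N + 1) := by
      gcongr
      · exact (setLIntegral_le_lintegral _ _).trans hgN
      · exact (hsmall A hA).le
    _ = ENNReal.ofReal η := by
      rw [← ENNReal.ofReal_natCast, ← ENNReal.ofReal_one, ← ENNReal.ofReal_add (by positivity)
        zero_le_one, ← ENNReal.ofReal_mul (by positivity)]
      congr 1
      rw [inv_div, div_mul_cancel₀ _ (by positivity)]

theorem stmt_4
    {𝕏 : Type*} [TopologicalSpace 𝕏] [PolishSpace 𝕏] [LocallyCompactSpace 𝕏]
    [MeasurableSpace 𝕏] [BorelSpace 𝕏]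
    (T : ℝ) (hT : 0 < T)
    (ν : Measure 𝕏) [SigmaFinite ν] (hνK : ∀ Kc : Set 𝕏, IsCompact Kc → ν Kc < ⊤)
    (νT : Measure (ℝ × 𝕏)) (hνT : νT = (volume.restrict (Set.Icc 0 T)).prod ν)
    (h : ℝ × 𝕏 → ℝ) (hm : Measurable h)
    (hL2 : ∫⁻ q, ENNReal.ofReal (|h q| ^ 2) ∂νT < ⊤)
    (hexp : ∀ δ : ℝ, 0 < δ → ∀ E : Set (ℝ × 𝕏), MeasurableSet E → νT E < ⊤ →
        ∫⁻ q in E, ENNReal.ofReal (Real.exp (δ * |h q|)) ∂νT < ⊤)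
    (N : ℕ) :
    ∀ η : ℝ, 0 < η → ∃ δ : ℝ, 0 < δ ∧
      ∀ A : Set ℝ, MeasurableSet A → A ⊆ Set.Icc 0 T → volume A < ENNReal.ofReal δ →
        ∀ g ∈ {g : ℝ × 𝕏 → ℝ | Measurable g ∧ (∀ q, 0 ≤ g q) ∧
            ∫⁻ q, ENNReal.ofReal (g q * Real.log (g q) - g q + 1) ∂νT ≤ (N : ℝ≥0∞)},
          ∫⁻ q in A ×ˢ (Set.univ : Set 𝕏), ENNReal.ofReal (|h q| * |g q - 1|) ∂νT
            ≤ ENNReal.ofReal η :=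
  stmt_4_general T ν νT hνT h hm hL2 hexp N
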